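/- arXiv:1603.07616 — 3 statements merged into one kernel-verified Lean document; each statement's English description precedes it below -/
import Mathlib

section
/- Let Γ ↷ (X,μ) be a probability measure preserving action of a countable group Γ, and let w₁, w₂ : Γ × X → Δ be cocycles into a countable group Δ. Let μ = ∫_Y ν dρ(ν) be an integral decomposition of μ, where ρ is a Borel probability measure on the space Y of Γ-invariant Borel probability measures on X. Then d_μ(w₁,w₂) ≤ ∫_Y d_ν(w₁,w₂) dρ(ν) ≤ 4·d_μ(w₁,w₂). -/
/-!
Let `Γ` act on `X × Δ` by `T_g (x, d) = (g • x, w₁(g, x) d w₂(g, x)⁻¹)`. Each `T_g` preserves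
`ν ⊗ count` for every invariant `ν`, the cocycle identities make `g ↦ T_g` an action almost
everywhere, and for the indicator `ξ` of `X × {1}` one has `‖ξ ∘ T_g - ξ‖₂² = 2 ν {w₁ g ≠ w₂ g}`.

In `L²(μ ⊗ count)` the orbit of `ξ` lies in the ball of radius `(2 d_μ)^{1/2}` around `ξ`. The
point of least norm `η` of the closed convex hull of the orbit is unique, hence `Γ`-invariant, and
`‖ξ - η‖² ≤ 2 d_μ`. Invariance of `η` passes to `L²(ν ⊗ count)` for `ρ`-almost every `ν`, where
`‖ξ ∘ T_g - ξ‖ ≤ ‖ξ ∘ T_g - η‖ + ‖η - ξ‖ = 2 ‖ξ - η‖` gives `ν {w₁ g ≠ w₂ g} ≤ 2 ‖ξ - η‖²_ν`.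
Integrating over `ρ` yields `∫ d_ν dρ ≤ 2 ‖ξ - η‖²_μ ≤ 4 d_μ`.
-/

open MeasureTheory Filter Set Topology ENNReal

/-- A measurable cocycle for a nonsingular action, with values in a (countable) group. -/
def IsCocycleFor {I X Δ : Type*} [MeasurableSpace X] [Monoid I] [Mul Δ] (μ : Measure X)
    (act : I → X → X) (w : I → X → Δ) : Prop :=
  (∀ g (d : Δ), MeasurableSet {x | w g x = d}) ∧
  ∀ g₁ g₂ : I, ∀ᵐ x ∂μ, w (g₁ * g₂) x = w g₁ (act g₂ x) * w g₂ x

/-- The uniform distance `d_μ(w₁,w₂) = sup_g μ {x | w₁(g,x) ≠ w₂(g,x)}` between two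
cocycles. -/
noncomputable def cocycleDist {I X Δ : Type*} [MeasurableSpace X] (μ : Measure X)
    (w₁ w₂ : I → X → Δ) : ℝ≥0∞ :=
  ⨆ g : I, μ {x | w₁ g x ≠ w₂ g x}

open Function
open scoped symmDiff

section FixedPoint

variable {E : Type*} [NormedAddCommGroup E] [InnerProductSpace ℝ E]

theorem eq_of_norm_sub_eq_iInf_of_convex {K : Set E} (hK : Convex ℝ K) {u v v' : E}
    (hv : v ∈ K) (hv' : v' ∈ K) (hmin : ‖u - v‖ = ⨅ w : K, ‖u - w‖)
    (hmin' : ‖u - v'‖ = ⨅ w : K, ‖u - w‖) : v = v' := by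
  have h := (norm_eq_iInf_iff_real_inner_le_zero hK hv).1 hmin v' hv'
  have h' := (norm_eq_iInf_iff_real_inner_le_zero hK hv').1 hmin' v hv
  have hsum : ‖v' - v‖ ^ 2 = inner ℝ (u - v) (v' - v) + inner ℝ (u - v') (v - v') := by
    rw [← real_inner_self_eq_norm_sq, ← neg_sub v' v, inner_neg_right, ← sub_eq_add_neg,
      ← inner_sub_left]
    congr 1; abel
  have hzero : ‖v' - v‖ = 0 := by nlinarith [norm_nonneg (v' - v)]
  exact (sub_eq_zero.1 (norm_eq_zero.1 hzero)).symm

theorem exists_isFixedPt_mem_closure_convexHull [CompleteSpace E] {ι : Type*}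
    (π : ι → E →ₗᵢ[ℝ] E) {S : Set E} (hS : S.Nonempty) (hπS : ∀ i, MapsTo (π i) S S) :
    ∃ η ∈ closure (convexHull ℝ S), ∀ i, IsFixedPt (π i) η := by
  set K := closure (convexHull ℝ S)
  have hK : Convex ℝ K := (convex_convexHull ℝ S).closure
  obtain ⟨η, hηK, hη⟩ := exists_norm_eq_iInf_of_complete_convex hS.convexHull.closure
    isClosed_closure.isComplete hK 0
  refine ⟨η, hηK, fun i => ?_⟩
  have hπK : MapsTo (π i) K K := by
    refine MapsTo.closure (fun x hx => ?_) (π i).continuous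
    exact convexHull_mono (hπS i).image_subset
      ((π i).toLinearMap.image_convexHull S ▸ mem_image_of_mem (π i) hx)
  refine eq_of_norm_sub_eq_iInf_of_convex hK (hπK hηK) hηK ?_ hη
  simpa only [zero_sub, norm_neg, LinearIsometry.norm_map] using hη

end FixedPoint

section Decomposition

variable {X : Type*} [MeasurableSpace X] {μ : Measure X} {ρ : Measure (Measure X)}

theorem lintegral_lintegral_of_decomp (hdecomp : ∀ s, MeasurableSet s → μ s = ∫⁻ ν, ν s ∂ρ)
    {f : X → ℝ≥0∞} (hf : Measurable f) : ∫⁻ ν, ∫⁻ x, f x ∂ν ∂ρ = ∫⁻ x, f x ∂μ := by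
  have hbind : μ = ρ.bind id :=
    Measure.ext fun s hs => by rw [Measure.bind_apply hs aemeasurable_id]; exact hdecomp s hs
  rw [hbind, Measure.lintegral_bind aemeasurable_id hf.aemeasurable]
  rfl

variable {Y : Type*} [MeasurableSpace Y] {κ : Measure Y} [SFinite κ]
  {E : Type*} [NormedAddCommGroup E]

theorem lintegral_eLpNorm_prod_sq_of_decomp
    (hdecomp : ∀ s, MeasurableSet s → μ s = ∫⁻ ν, ν s ∂ρ)
    {G : X × Y → E} (hG : StronglyMeasurable G) :
    ∫⁻ ν, eLpNorm G 2 (ν.prod κ) ^ 2 ∂ρ = eLpNorm G 2 (μ.prod κ) ^ 2 := by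
  have hsq : ∀ m : Measure (X × Y), eLpNorm G 2 m ^ 2 = ∫⁻ z, ‖G z‖ₑ ^ 2 ∂m := fun m => by
    simpa using eLpNorm_nnreal_pow_eq_lintegral (f := G) (μ := m) (p := 2) two_ne_zero
  have hGm : Measurable fun z => ‖G z‖ₑ ^ 2 := hG.enorm.pow_const 2
  simp_rw [hsq, lintegral_prod _ hGm.aemeasurable]
  exact lintegral_lintegral_of_decomp hdecomp hGm.lintegral_prod_right'

theorem ae_eventuallyEq_prod_of_decomp
    (hdecomp : ∀ s, MeasurableSet s → μ s = ∫⁻ ν, ν s ∂ρ)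
    {F G : X × Y → E} (hF : StronglyMeasurable F) (hG : StronglyMeasurable G)
    (hFG : F =ᵐ[μ.prod κ] G) : ∀ᵐ ν ∂ρ, F =ᵐ[ν.prod κ] G := by
  set N := {z | F z = G z}ᶜ
  have hN : MeasurableSet N := (hF.measurableSet_eq_fun hG).compl
  have hsection : Measurable fun x => κ (Prod.mk x ⁻¹' N) := measurable_measure_prodMk_left hN
  have hint : ∫⁻ ν, (ν.prod κ) N ∂ρ = 0 := by
    simp_rw [Measure.prod_apply hN]
    rw [lintegral_lintegral_of_decomp hdecomp hsection, ← Measure.prod_apply hN]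
    exact hFG
  have hmeas : Measurable fun ν : Measure X => (ν.prod κ) N := by
    simp_rw [Measure.prod_apply hN]
    exact Measure.measurable_lintegral hsection
  exact (lintegral_eq_zero_iff hmeas).1 hint

theorem cocycleDist_le_lintegral_of_decomp {I Δ : Type*}
    (hdecomp : ∀ s, MeasurableSet s → μ s = ∫⁻ ν, ν s ∂ρ) {w₁ w₂ : I → X → Δ}
    (hE : ∀ g, MeasurableSet {x | w₁ g x ≠ w₂ g x}) :
    cocycleDist μ w₁ w₂ ≤ ∫⁻ ν, cocycleDist ν w₁ w₂ ∂ρ :=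
  iSup_le fun g => (hdecomp _ (hE g)).trans_le <|
    lintegral_mono fun ν => le_iSup (fun g => ν {x | w₁ g x ≠ w₂ g x}) g

end Decomposition

theorem eLpNorm_comp_sub_le_two_mul {α E : Type*} [MeasurableSpace α] [NormedAddCommGroup E]
    {m : Measure α} {T : α → α} (hT : MeasurePreserving T m m) {a F : α → E}
    (ha : AEStronglyMeasurable a m) (hF : AEStronglyMeasurable F m) (hFT : F ∘ T =ᵐ[m] F)
    {p : ℝ≥0∞} (hp : 1 ≤ p) :
    eLpNorm (a ∘ T - a) p m ≤ 2 * eLpNorm (a - F) p m := by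
  have hshift : eLpNorm (a ∘ T - F) p m = eLpNorm (a - F) p m := by
    rw [← eLpNorm_comp_measurePreserving (ha.sub hF) hT]
    refine eLpNorm_congr_ae (hFT.mono fun z hz => ?_)
    simp only [Pi.sub_apply, comp_apply] at hz ⊢
    rw [hz]
  calc eLpNorm (a ∘ T - a) p m = eLpNorm ((a ∘ T - F) + (F - a)) p m := by
        rw [sub_add_sub_cancel]
    _ ≤ eLpNorm (a ∘ T - F) p m + eLpNorm (F - a) p m :=
        eLpNorm_add_le ((ha.comp_measurePreserving hT).sub hF) (hF.sub ha) hp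
    _ = 2 * eLpNorm (a - F) p m := by rw [hshift, eLpNorm_sub_comm F a, two_mul]

theorem eLpNorm_indicator_one_sq {α : Type*} [MeasurableSpace α] {m : Measure α} {s : Set α}
    (hs : MeasurableSet s) : eLpNorm (s.indicator fun _ => (1 : ℝ)) 2 m ^ 2 = m s := by
  rw [eLpNorm_indicator_const hs two_ne_zero ofNat_ne_top]
  simp only [enorm_one, one_mul, toReal_ofNat, one_div]
  rw [← ENNReal.rpow_two, ENNReal.rpow_inv_rpow two_ne_zero]

section CountingMeasure

variable {X : Type*} [MeasurableSpace X] {Δ : Type*} [Countable Δ]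
  [MeasurableSpace Δ] [DiscreteMeasurableSpace Δ] {ν : Measure X}

theorem prod_count_symmDiff_graph {φ χ : X → Δ} (hφ : Measurable φ) (hχ : Measurable χ) :
    (ν.prod .count) ({z | z.2 = φ z.1} ∆ {z | z.2 = χ z.1}) = 2 * ν {x | φ x ≠ χ x} := by
  have hgraph : ∀ {ψ : X → Δ}, Measurable ψ → MeasurableSet {z : X × Δ | z.2 = ψ z.1} :=
    fun hψ => measurableSet_eq_fun measurable_snd (hψ.comp measurable_fst)
  have hne : MeasurableSet {x | φ x ≠ χ x} := (measurableSet_eq_fun hφ hχ).compl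
  rw [Measure.prod_apply ((hgraph hφ).symmDiff (hgraph hχ)), ← lintegral_indicator_const hne]
  refine lintegral_congr fun x => ?_
  by_cases h : φ x = χ x
  · simp [h]
  · have : Prod.mk x ⁻¹' ({z : X × Δ | z.2 = φ z.1} ∆ {z | z.2 = χ z.1}) = {φ x, χ x} := by
      ext d
      simp only [mem_preimage, mem_symmDiff, mem_ofPred_eq, mem_insert_iff, mem_singleton_iff]
      grind
    simp [h, this, Measure.count_apply (Set.toFinite _).measurableSet, Set.encard_pair h]

variable [Group Δ]

theorem measurePreserving_prod_count_skew {ν' : Measure X} {f : X → X} {a b : X → Δ}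
    (hf : MeasurePreserving f ν ν') (ha : Measurable a) (hb : Measurable b) :
    MeasurePreserving (fun z : X × Δ => (f z.1, a z.1 * z.2 * b z.1))
      (ν.prod .count) (ν'.prod .count) := by
  have hmeas : Measurable fun z : X × Δ => (f z.1, a z.1 * z.2 * b z.1) :=
    (hf.measurable.comp measurable_fst).prodMk
      (((ha.comp measurable_fst).mul measurable_snd).mul (hb.comp measurable_fst))
  refine ⟨hmeas, Measure.ext fun s hs => ?_⟩
  rw [Measure.map_apply hmeas hs, Measure.prod_apply (hmeas hs), Measure.prod_apply hs,
    ← hf.lintegral_comp (measurable_measure_prodMk_left hs)]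
  refine lintegral_congr fun x => ?_
  change Measure.count ((a x * ·) ⁻¹' ((· * b x) ⁻¹' (Prod.mk (f x) ⁻¹' s))) = _
  exact (measure_preimage_mul (Measure.count : Measure Δ) (a x) _).trans
    (measure_preimage_mul_right _ (b x) _)

end CountingMeasure

section SkewAction

variable {X : Type*} [MeasurableSpace X] {Γ : Type*} [Group Γ] [MulAction Γ X]
  {Δ : Type*} [Group Δ] {ν : Measure X}

def skewAction (w₁ w₂ : Γ → X → Δ) (g : Γ) (z : X × Δ) : X × Δ :=
  (g • z.1, w₁ g z.1 * z.2 * (w₂ g z.1)⁻¹)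

variable {w₁ w₂ : Γ → X → Δ} [MeasurableSpace Δ]

theorem skewAction_comp_ae {κ : Measure Δ} (hw₁ : IsCocycleFor ν (fun g x => g • x) w₁)
    (hw₂ : IsCocycleFor ν (fun g x => g • x) w₂) (g h : Γ) :
    skewAction w₁ w₂ g ∘ skewAction w₁ w₂ h =ᵐ[ν.prod κ] skewAction w₁ w₂ (g * h) := by
  filter_upwards [Measure.quasiMeasurePreserving_fst.ae ((hw₁.2 g h).and (hw₂.2 g h))] with z hz
  simp only [comp_apply, skewAction, mul_smul, hz.1, hz.2, mul_inv_rev, mul_assoc]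

variable [Countable Δ]

theorem IsCocycleFor.measurable {I : Type*} [Monoid I] {act : I → X → X} {w : I → X → Δ}
    (hw : IsCocycleFor ν act w) (g : I) : Measurable (w g) :=
  measurable_to_countable' fun d => hw.1 g d

variable [DiscreteMeasurableSpace Δ]

theorem measurePreserving_skewAction {g : Γ} (hg : MeasurePreserving (g • ·) ν ν)
    (hw₁ : Measurable (w₁ g)) (hw₂ : Measurable (w₂ g)) :
    MeasurePreserving (skewAction w₁ w₂ g) (ν.prod .count) (ν.prod .count) :=
  measurePreserving_prod_count_skew hg hw₁ hw₂.inv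

theorem prod_count_symmDiff_skewAction {g : Γ} (hw₁ : Measurable (w₁ g))
    (hw₂ : Measurable (w₂ g)) :
    (ν.prod .count) ((skewAction w₁ w₂ g ⁻¹' {z | z.2 = 1}) ∆ {z | z.2 = 1})
      = 2 * ν {x | w₁ g x ≠ w₂ g x} := by
  have hpre : skewAction w₁ w₂ g ⁻¹' {z | z.2 = 1} = {z | z.2 = (w₁ g z.1)⁻¹ * w₂ g z.1} := by
    ext z
    simp [skewAction, mul_inv_eq_one, eq_inv_mul_iff_mul_eq]
  rw [hpre, prod_count_symmDiff_graph (φ := fun x => (w₁ g x)⁻¹ * w₂ g x) (χ := fun _ => 1)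
    (hw₁.inv.mul hw₂) measurable_const]
  simp_rw [ne_eq, inv_mul_eq_one]

theorem measure_ne_le_two_mul_eLpNorm_sq {g : Γ} (hg : MeasurePreserving (g • ·) ν ν)
    (hw₁ : Measurable (w₁ g)) (hw₂ : Measurable (w₂ g)) {F : X × Δ → ℝ} (hF : StronglyMeasurable F)
    (hFT : F ∘ skewAction w₁ w₂ g =ᵐ[ν.prod .count] F) :
    ν {x | w₁ g x ≠ w₂ g x}
      ≤ 2 * eLpNorm ({z | z.2 = 1}.indicator (fun _ => (1 : ℝ)) - F) 2 (ν.prod .count) ^ 2 := by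
  set A : Set (X × Δ) := {z | z.2 = 1}
  have hA : MeasurableSet A := measurableSet_eq_fun measurable_snd measurable_const
  have hT := measurePreserving_skewAction hg hw₁ hw₂
  have hcomp : (A.indicator fun _ => (1 : ℝ)) ∘ skewAction w₁ w₂ g
      = (skewAction w₁ w₂ g ⁻¹' A).indicator fun _ => 1 :=
    funext fun _ => (indicator_comp_right _).symm
  have key := eLpNorm_comp_sub_le_two_mul hT
    (stronglyMeasurable_const (b := (1 : ℝ)) |>.indicator hA).aestronglyMeasurable
    hF.aestronglyMeasurable hFT one_le_two
  rw [hcomp, eLpNorm_indicator_sub_indicator] at key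
  have key2 := pow_le_pow_left' key 2
  rw [eLpNorm_indicator_one_sq ((hA.preimage hT.measurable).symmDiff hA),
    prod_count_symmDiff_skewAction hw₁ hw₂, mul_pow, sq (2 : ℝ≥0∞), mul_assoc] at key2
  exact (ENNReal.mul_le_mul_iff_right two_ne_zero ofNat_ne_top).1 key2

theorem exists_invariant_eLpNorm_sq_le {μ : Measure X} [IsFiniteMeasure μ]
    (hμ : ∀ g : Γ, MeasurePreserving (g • ·) μ μ)
    (hw₁ : IsCocycleFor μ (fun g x => g • x) w₁) (hw₂ : IsCocycleFor μ (fun g x => g • x) w₂) :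
    ∃ F : X × Δ → ℝ, StronglyMeasurable F ∧
      (∀ g, F ∘ skewAction w₁ w₂ g =ᵐ[μ.prod .count] F) ∧
      eLpNorm ({z | z.2 = 1}.indicator (fun _ => (1 : ℝ)) - F) 2 (μ.prod .count) ^ 2
        ≤ 2 * cocycleDist μ w₁ w₂ := by
  set m := μ.prod (.count : Measure Δ)
  set A : Set (X × Δ) := {z | z.2 = 1}
  have hA : MeasurableSet A := measurableSet_eq_fun measurable_snd measurable_const
  have hmA : m A ≠ ∞ := by
    rw [show A = univ ×ˢ {1} by ext; simp [A], Measure.prod_prod]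
    simp
  have hT g : MeasurePreserving (skewAction w₁ w₂ g) m m :=
    measurePreserving_skewAction (hμ g) (hw₁.measurable g) (hw₂.measurable g)
  let π g : Lp ℝ 2 m →ₗᵢ[ℝ] Lp ℝ 2 m := Lp.compMeasurePreservingₗᵢ ℝ _ (hT g)
  let ξ : Lp ℝ 2 m := indicatorConstLp 2 hA hmA 1
  have hπξ g : π g ξ = indicatorConstLp 2 (hA.preimage (hT g).measurable)
      (by rwa [(hT g).measure_preimage hA.nullMeasurableSet]) 1 := rfl
  have hπ g h : π h (π g ξ) = π (g * h) ξ := by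
    change Lp.compMeasurePreserving _ (hT h) (π g ξ) = _
    rw [hπξ, hπξ, Lp.indicatorConstLp_compMeasurePreserving]
    refine (indicatorConstLp_inj _ _ _ _ one_ne_zero).2 (eventuallyEq_set.2 ?_)
    filter_upwards [skewAction_comp_ae hw₁ hw₂ g h] with z hz
    rw [mem_preimage, mem_preimage, mem_preimage, ← hz]
    rfl
  obtain ⟨η, hηK, hηfix⟩ := exists_isFixedPt_mem_closure_convexHull π
    (range_nonempty fun g => π g ξ) (by rintro h _ ⟨g, rfl⟩; exact ⟨g * h, (hπ g h).symm⟩)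
  have hdist : edist η ξ ≤ (2 * cocycleDist μ w₁ w₂) ^ (2⁻¹ : ℝ) := by
    refine closure_minimal (convexHull_min ?_ (convex_closedEBall _ _))
      Metric.isClosed_closedEBall hηK
    rintro _ ⟨g, rfl⟩
    show edist (π g ξ) ξ ≤ _
    rw [hπξ g, edist_indicatorConstLp_eq_enorm]
    refine enorm_indicatorConstLp_le.trans ?_
    rw [prod_count_symmDiff_skewAction (hw₁.measurable g) (hw₂.measurable g)]
    simp only [enorm_one, one_mul, toReal_ofNat, one_div]
    gcongr
    exact le_iSup (fun g => μ {x | w₁ g x ≠ w₂ g x}) g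
  refine ⟨η, Lp.stronglyMeasurable η, fun g => ?_, ?_⟩
  · exact (Lp.coeFn_compMeasurePreserving η (hT g)).symm.trans
      (congrArg (fun f : Lp ℝ 2 m => (f : X × Δ → ℝ)) (hηfix g) ▸ EventuallyEq.rfl)
  · calc eLpNorm (A.indicator (fun _ => (1 : ℝ)) - ⇑η) 2 m ^ 2 = edist η ξ ^ 2 := by
          rw [edist_comm, Lp.edist_def, eLpNorm_congr_ae (indicatorConstLp_coeFn.sub .rfl)]
      _ ≤ ((2 * cocycleDist μ w₁ w₂) ^ (2⁻¹ : ℝ)) ^ 2 := by gcongr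
      _ = 2 * cocycleDist μ w₁ w₂ := by
          rw [← ENNReal.rpow_two, ENNReal.rpow_inv_rpow two_ne_zero]

end SkewAction

theorem cocycleDist_average_general
    {X : Type*} [MeasurableSpace X] {Γ : Type*} [Group Γ] [Countable Γ]
    [MulAction Γ X]
    -- Γ ↷ (X, μ) is a probability measure preserving action
    (μ : Measure X) [IsProbabilityMeasure μ]
    (hpmp : ∀ g : Γ, MeasurePreserving (fun x : X => g • x) μ μ)
    -- w₁, w₂ : cocycles into a countable group Δ
    {Δ : Type*} [Group Δ] [Countable Δ]
    (w₁ w₂ : Γ → X → Δ)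
    (hw₁ : IsCocycleFor μ (fun (g : Γ) (x : X) => g • x) w₁)
    (hw₂ : IsCocycleFor μ (fun (g : Γ) (x : X) => g • x) w₂)
    -- μ = ∫_Y ν dρ(ν) is an integral decomposition of μ, where ρ is a Borel probability
    -- measure on the space Y of Γ-invariant Borel probability measures on X
    (ρ : Measure (Measure X))
    (hρsupp : ∀ᵐ ν ∂ρ, IsProbabilityMeasure ν ∧
      ∀ g : Γ, Measure.map (fun x : X => g • x) ν = ν)
    (hdecomp : ∀ s : Set X, MeasurableSet s → μ s = ∫⁻ ν, ν s ∂ρ) :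
    cocycleDist μ w₁ w₂ ≤ (∫⁻ ν, cocycleDist ν w₁ w₂ ∂ρ) ∧
      (∫⁻ ν, cocycleDist ν w₁ w₂ ∂ρ) ≤ 4 * cocycleDist μ w₁ w₂ := by
  let : MeasurableSpace Δ := ⊤
  refine ⟨cocycleDist_le_lintegral_of_decomp hdecomp fun g =>
    (measurableSet_eq_fun (hw₁.measurable g) (hw₂.measurable g)).compl, ?_⟩
  obtain ⟨F, hFm, hFinv, hFdist⟩ := exists_invariant_eLpNorm_sq_le hpmp hw₁ hw₂
  set G := {z : X × Δ | z.2 = 1}.indicator (fun _ => (1 : ℝ)) - F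
  have hT g :=
    (measurePreserving_skewAction (hpmp g) (hw₁.measurable g) (hw₂.measurable g)).measurable
  have hfiber : ∀ᵐ ν ∂ρ, cocycleDist ν w₁ w₂ ≤ 2 * eLpNorm G 2 (ν.prod .count) ^ 2 := by
    have hFinvν : ∀ᵐ ν ∂ρ, ∀ g, F ∘ skewAction w₁ w₂ g =ᵐ[ν.prod .count] F :=
      ae_all_iff.2 fun g =>
        ae_eventuallyEq_prod_of_decomp hdecomp (hFm.comp_measurable (hT g)) hFm (hFinv g)
    filter_upwards [hρsupp, hFinvν] with ν ⟨_, hνinv⟩ hνF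
    exact iSup_le fun g => measure_ne_le_two_mul_eLpNorm_sq ⟨(hpmp g).measurable, hνinv g⟩
      (hw₁.measurable g) (hw₂.measurable g) hFm (hνF g)
  calc ∫⁻ ν, cocycleDist ν w₁ w₂ ∂ρ ≤ ∫⁻ ν, 2 * eLpNorm G 2 (ν.prod .count) ^ 2 ∂ρ :=
        lintegral_mono_ae hfiber
    _ = 2 * eLpNorm G 2 (μ.prod .count) ^ 2 := by
        rw [lintegral_const_mul' _ _ ofNat_ne_top, lintegral_eLpNorm_prod_sq_of_decomp hdecomp
          ((stronglyMeasurable_const.indicator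
            (measurableSet_eq_fun measurable_snd measurable_const)).sub hFm)]
    _ ≤ 2 * (2 * cocycleDist μ w₁ w₂) := by gcongr
    _ = 4 * cocycleDist μ w₁ w₂ := by ring

theorem cocycleDist_average
    {X : Type*} [MeasurableSpace X] {Γ : Type*} [Group Γ] [Countable Γ]
    [MulAction Γ X]
    -- Γ ↷ (X, μ) is a probability measure preserving action
    (μ : Measure X) [IsProbabilityMeasure μ]
    (hmeas : ∀ g : Γ, Measurable (fun x : X => g • x))
    (hpmp : ∀ g : Γ, MeasurePreserving (fun x : X => g • x) μ μ)
    -- w₁, w₂ : cocycles into a countable group Δ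
    {Δ : Type*} [Group Δ] [Countable Δ]
    (w₁ w₂ : Γ → X → Δ)
    (hw₁ : IsCocycleFor μ (fun (g : Γ) (x : X) => g • x) w₁)
    (hw₂ : IsCocycleFor μ (fun (g : Γ) (x : X) => g • x) w₂)
    -- μ = ∫_Y ν dρ(ν) is an integral decomposition of μ, where ρ is a Borel probability
    -- measure on the space Y of Γ-invariant Borel probability measures on X
    (ρ : Measure (Measure X)) [IsProbabilityMeasure ρ]
    (hρsupp : ∀ᵐ ν ∂ρ, IsProbabilityMeasure ν ∧
      ∀ g : Γ, Measure.map (fun x : X => g • x) ν = ν)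
    (hdecomp : ∀ s : Set X, MeasurableSet s → μ s = ∫⁻ ν, ν s ∂ρ) :
    cocycleDist μ w₁ w₂ ≤ (∫⁻ ν, cocycleDist ν w₁ w₂ ∂ρ) ∧
      (∫⁻ ν, cocycleDist ν w₁ w₂ ∂ρ) ≤ 4 * cocycleDist μ w₁ w₂ :=
  cocycleDist_average_general μ hpmp w₁ w₂ hw₁ hw₂ ρ hρsupp hdecomp
end

section
/- Let G be a locally compact Polish group and Γ < G a countable dense subgroup. Let Δ be a countable group, φ : G → Δ a measurable map, and δ₁, δ₂ : Γ → Δ group homomorphisms such that φ(gx) = δ₁(g)·φ(x)·δ₂(g)⁻¹ for all g ∈ Γ and almost every x ∈ G (with respect to Haar measure). Then there exists an open subgroup G₀ < G such that φ is (almost everywhere) constant on every left coset of G₀, i.e. there is a map φ̃ : G/G₀ → Δ such that φ(x) = φ̃(xG₀) for almost every x ∈ G. -/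
/-!
Put `H = {g | φ(xg) = φ(x) for a.e. x}`, a subgroup of `G`. For every `z`, the set
`E_z = {x | φ(xz) = φ(x)}` is a.e. invariant under left translation by `Γ`, because the
intertwining relation multiplies both sides of `φ(γxz) = φ(γx)` by the same elements of `Δ`.
The a.e. stabiliser of a set is closed, so by density of `Γ` it is all of `G`, and ergodicity of
the left action of `G` on itself makes each `E_z` null or conull; `H` is the set of `z` for which
it is conull. If `H` were null, then by Fubini a.e. `x` would satisfy `φ(y) ≠ φ(x)` for a.e.
`y`, which is impossible since `Δ` is countable. Hence `H` has positive measure, so it is open by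
Steinhaus' theorem, and Fubini again shows that `φ` is a.e. constant on a.e. left coset of `H`.
-/

open MeasureTheory Filter Set Topology ENNReal
open scoped Pointwise symmDiff

theorem ae_measure_fiber_ne_zero {α Δ : Type*} [MeasurableSpace α] (μ : Measure α) [Countable Δ]
    (φ : α → Δ) : ∀ᵐ x ∂μ, μ (φ ⁻¹' {φ x}) ≠ 0 := by
  have hbad : {x | ¬μ (φ ⁻¹' {φ x}) ≠ 0} = ⋃ d ∈ {d | μ (φ ⁻¹' {d}) = 0}, φ ⁻¹' {d} := by
    ext; simp
  rw [ae_iff, hbad]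
  exact (measure_biUnion_null_iff (to_countable _)).2 fun _ hd ↦ hd

theorem measurableSet_setOf_apply_mul_eq {G Δ : Type*} [Mul G] [MeasurableSpace G]
    [MeasurableMul₂ G] [MeasurableSpace Δ] [MeasurableEq Δ] {φ : G → Δ} (hφ : Measurable φ) :
    MeasurableSet {p : G × G | φ (p.1 * p.2) = φ p.1} :=
  measurableSet_eq_fun (hφ.comp measurable_mul) (hφ.comp measurable_fst)

section MeasurableGroup

variable {G : Type*} [Group G] [MeasurableSpace G] [MeasurableMul₂ G]
  (μ : Measure G) [μ.IsMulLeftInvariant]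

theorem ae_of_ae_mul_left {p : G → Prop} (x : G) (h : ∀ᵐ z ∂μ, p (x * z)) : ∀ᵐ y ∂μ, p y := by
  rw [← map_mul_left_ae μ x]
  exact eventually_map.2 h

variable [MeasurableInv G] [SFinite μ]

def aeRightPeriods {α : Type*} (φ : G → α) : Subgroup G where
  carrier := {g | ∀ᵐ x ∂μ, φ (x * g) = φ x}
  one_mem' := by simp
  mul_mem' {a b} ha hb := by
    filter_upwards [ha, (quasiMeasurePreserving_mul_right μ a).ae hb] with x hxa hxb
    rw [← mul_assoc, hxb, hxa]
  inv_mem' {a} ha := by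
    filter_upwards [(quasiMeasurePreserving_mul_right μ a⁻¹).ae ha] with x hx
    simpa using hx.symm

theorem mem_aestabilizer_setOf_apply_mul_eq {Δ : Type*} [Group Δ] {φ : G → Δ} {a : G} {u v : Δ}
    (h : ∀ᵐ x ∂μ, φ (a * x) = u * φ x * v) (z : G) :
    a ∈ MulAction.aestabilizer G μ {x | φ (x * z) = φ x} := by
  rw [← inv_mem_iff, MulAction.mem_aestabilizer]
  filter_upwards [h, (quasiMeasurePreserving_mul_right μ z).ae h] with x hx hxz
  change φ (a * (x * z)) = u * φ (x * z) * v at hxz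
  change (x ∈ a⁻¹ • {x | φ (x * z) = φ x}) = (x ∈ {x | φ (x * z) = φ x})
  rw [mem_smul_set_iff_inv_smul_mem, inv_inv, smul_eq_mul, eq_iff_iff]
  change φ (a * x * z) = φ (a * x) ↔ φ (x * z) = φ x
  rw [mul_assoc, hxz, hx]
  simp

variable {μ} {Δ : Type*} [MeasurableSpace Δ] [MeasurableEq Δ] {φ : G → Δ}

theorem measurableSet_aeRightPeriods (hφ : Measurable φ) :
    MeasurableSet (aeRightPeriods μ φ : Set G) := by
  convert measurable_measure_prodMk_right (μ := μ) (measurableSet_setOf_apply_mul_eq hφ).compl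
    (measurableSet_singleton 0) using 1
  ext z
  exact ae_iff

theorem ae_ae_apply_eq_of_mem_aeRightPeriods (hφ : Measurable φ) :
    ∀ᵐ x ∂μ, ∀ᵐ y ∂μ, x⁻¹ * y ∈ aeRightPeriods μ φ → φ y = φ x := by
  have hmeas : MeasurableSet {q : G × G | q.1 ∈ aeRightPeriods μ φ → φ (q.2 * q.1) = φ q.2} :=
    ((measurableSet_aeRightPeriods hφ).preimage measurable_fst).imp
      ((measurableSet_setOf_apply_mul_eq hφ).preimage measurable_swap)
  have h : ∀ᵐ z ∂μ, ∀ᵐ x ∂μ, z ∈ aeRightPeriods μ φ → φ (x * z) = φ x :=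
    ae_of_all _ fun _ ↦ eventually_imp_distrib_left.2 id
  filter_upwards [(Measure.ae_ae_comm hmeas).1 h] with x hx
  exact ae_of_ae_mul_left μ x (p := fun y ↦ x⁻¹ * y ∈ aeRightPeriods μ φ → φ y = φ x)
    (by simpa using hx)

theorem measure_aeRightPeriods_ne_zero [NeZero μ] [Countable Δ] (hφ : Measurable φ)
    (hconst : ∀ z, EventuallyConst {x | φ (x * z) = φ x} (ae μ)) :
    μ (aeRightPeriods μ φ) ≠ 0 := by
  intro hnull
  have hoff : ∀ᵐ z ∂μ, ∀ᵐ x ∂μ, φ (x * z) ≠ φ x := by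
    filter_upwards [measure_eq_zero_iff_ae_notMem.1 hnull] with z hz
    exact (eventuallyConst_set.1 (hconst z)).resolve_left hz
  have hfiber : ∀ᵐ x ∂μ, μ (φ ⁻¹' {φ x}) = 0 := by
    filter_upwards [(Measure.ae_ae_comm (p := fun z x ↦ φ (x * z) ≠ φ x)
      ((measurableSet_setOf_apply_mul_eq hφ).compl.preimage measurable_swap)).1 hoff] with x hx
    exact measure_eq_zero_iff_ae_notMem.2 (ae_of_ae_mul_left μ x (p := (· ∉ φ ⁻¹' {φ x})) hx)
  obtain ⟨x, hx, hx'⟩ := (hfiber.and (ae_measure_fiber_ne_zero μ φ)).exists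
  exact hx' hx

end MeasurableGroup

section LocallyCompactGroup

variable {G : Type*} [Group G] [TopologicalSpace G] [IsTopologicalGroup G]
  [LocallyCompactSpace G] [SecondCountableTopology G] [MeasurableSpace G] [BorelSpace G]
  (μ : Measure G) [μ.IsHaarMeasure]

theorem tendsto_measure_smul_symmDiff_self {B : Set G} (hB : NullMeasurableSet B μ)
    (hμB : μ B ≠ ∞) : Tendsto (fun g : G ↦ μ ((g • B) ∆ B)) (𝓝 1) (𝓝 0) := by
  have hcont : Continuous fun g : G ↦ (⟨(g⁻¹ * ·), by fun_prop⟩ : C(G, G)) :=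
    (ContinuousMap.mk (fun p : G × G ↦ p.1⁻¹ * p.2) (by fun_prop)).curry.continuous
  simpa [← preimage_smul_inv] using tendsto_measure_symmDiff_preimage_nhds_zero (hcont.tendsto 1)
    (.of_forall fun g ↦ measurePreserving_mul_left μ g⁻¹) (measurePreserving_mul_left μ 1⁻¹) hB hμB

theorem tendsto_measure_smul_symmDiff_self_inter {A L : Set G} (hA : NullMeasurableSet A μ)
    (hL : IsCompact L) : Tendsto (fun g : G ↦ μ ((g • A) ∆ A ∩ L)) (𝓝 1) (𝓝 0) := by
  -- For `g` near `1`, only the part of `A` inside the compact set `closure (V * L)` matters on `L`.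
  obtain ⟨V, hV, hV1⟩ := exists_compact_mem_nhds (1 : G)
  have hD : IsCompact (closure (V * L)) := (hV.mul hL).closure
  have hB := tendsto_measure_smul_symmDiff_self μ
    (hA.inter isClosed_closure.measurableSet.nullMeasurableSet)
    ((measure_mono inter_subset_right).trans_lt hD.measure_lt_top).ne
  refine tendsto_of_tendsto_of_tendsto_of_le_of_le' tendsto_const_nhds hB
    (.of_forall fun _ ↦ bot_le) ?_
  filter_upwards [inv_mem_nhds_one G hV1] with g hg
  refine measure_mono fun x ⟨hx, hxL⟩ ↦ ?_
  have hgx : g⁻¹ * x ∈ closure (V * L) := subset_closure (mul_mem_mul hg hxL)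
  have hx' : x ∈ closure (V * L) := subset_closure ⟨1, mem_of_mem_nhds hV1, x, hxL, one_mul x⟩
  simp only [mem_symmDiff, mem_smul_set_iff_inv_smul_mem, smul_eq_mul, mem_inter_iff] at hx ⊢
  tauto

theorem isClosed_aestabilizer {A : Set G} (hA : NullMeasurableSet A μ) :
    IsClosed (MulAction.aestabilizer G μ A : Set G) := by
  refine isClosed_of_closure_subset fun g hg ↦ ?_
  have := mem_closure_iff_nhdsWithin_neBot.1 hg
  rw [SetLike.mem_coe, MulAction.mem_aestabilizer, ← measure_symmDiff_eq_zero_iff]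
  have hcompact : ∀ K, IsCompact K → μ ((g • A) ∆ A ∩ K) = 0 := by
    intro K hK
    have hg1 : Tendsto (fun h ↦ g⁻¹ * h) (𝓝 g) (𝓝 1) := by
      simpa using (continuous_const_mul g⁻¹).tendsto g
    have hlim : Tendsto (fun h ↦ μ (((g⁻¹ * h) • A) ∆ A ∩ g⁻¹ • K))
        (𝓝[MulAction.aestabilizer G μ A] g) (𝓝 0) :=
      (tendsto_measure_smul_symmDiff_self_inter μ hA (hK.smul g⁻¹)).comp
        (hg1.mono_left nhdsWithin_le_nhds)
    refine nonpos_iff_eq_zero.1 (ge_of_tendsto hlim (eventually_nhdsWithin_of_forall fun h hh ↦ ?_))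
    apply le_of_eq
    calc μ ((g • A) ∆ A ∩ K) = μ ((g • A) ∆ (h • A) ∩ K) :=
          measure_congr (((ae_eq_refl _).symmDiff (MulAction.mem_aestabilizer.1 hh).symm).inter
            (ae_eq_refl K))
      _ = μ (g⁻¹ • ((g • A) ∆ (h • A) ∩ K)) := (measure_smul μ g⁻¹ _).symm
      _ = μ (((g⁻¹ * h) • A) ∆ A ∩ g⁻¹ • K) := by
          rw [smul_set_inter, smul_set_symmDiff, inv_smul_smul, smul_smul, symmDiff_comm]
  rw [← inter_univ ((g • A) ∆ A), ← iUnion_compactCovering, inter_iUnion]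
  exact measure_iUnion_null fun n ↦ hcompact _ (isCompact_compactCovering G n)

theorem aeconst_of_dense_aestabilizer_of_isHaarMeasure {A : Set G}
    (hA : NullMeasurableSet A μ) (hd : Dense (MulAction.aestabilizer G μ A : Set G)) :
    EventuallyConst A (ae μ) :=
  MulAction.aeconst_of_aestabilizer_eq_top G hA <| SetLike.coe_injective <| by
    rw [← (isClosed_aestabilizer μ hA).closure_eq, hd.closure_eq]
    rfl

theorem Subgroup.isOpen_of_measure_ne_zero (H : Subgroup G)
    (hH : MeasurableSet (H : Set G)) (hμH : μ H ≠ 0) : IsOpen (H : Set G) :=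
  H.isOpen_of_mem_nhds <| mem_of_superset (Measure.div_mem_nhds_one_of_haar_pos μ _ hH hμH.bot_lt)
    fun _ ⟨_, ha, _, hb, hab⟩ ↦ hab ▸ H.div_mem ha hb

end LocallyCompactGroup

theorem exists_ae_eq_comp_mk_of_ae_ae {G α : Type*} [Group G] [TopologicalSpace G]
    [IsTopologicalGroup G] [MeasurableSpace G] (μ : Measure G) [μ.IsOpenPosMeasure] [Nonempty α]
    {H : Subgroup G} (hH : IsOpen (H : Set G)) {f : G → α}
    (hf : ∀ᵐ x ∂μ, ∀ᵐ y ∂μ, x⁻¹ * y ∈ H → f y = f x) :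
    ∃ ft : G ⧸ H → α, ∀ᵐ x ∂μ, f x = ft (QuotientGroup.mk x) := by
  refine ⟨fun c ↦ Classical.epsilon fun d ↦ ∀ᵐ y : G ∂μ, c = QuotientGroup.mk y → f y = d, ?_⟩
  filter_upwards [hf] with x hx
  have hx' : ∀ᵐ y : G ∂μ, (QuotientGroup.mk x : G ⧸ H) = QuotientGroup.mk y → f y = f x :=
    hx.mono fun y hy hxy ↦ hy (QuotientGroup.eq.1 hxy)
  have hcoset : ∃ᵐ y : G ∂μ, (QuotientGroup.mk x : G ⧸ H) = QuotientGroup.mk y := by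
    simp only [QuotientGroup.eq]
    exact frequently_ae_iff.2 <|
      (hH.preimage (continuous_const_mul x⁻¹)).measure_ne_zero μ ⟨x, by simp⟩
  have hft := Classical.epsilon_spec
    (p := fun d ↦ ∀ᵐ y : G ∂μ, (QuotientGroup.mk x : G ⧸ H) = QuotientGroup.mk y → f y = d)
    ⟨f x, hx'⟩
  obtain ⟨y, hxy, hfy, hfty⟩ := (hcoset.and_eventually (hx'.and hft)).exists
  exact (hfy hxy).symm.trans (hfty hxy)

theorem intertwiner_constant_on_open_cosets_general
    {G : Type*} [Group G] [TopologicalSpace G] [IsTopologicalGroup G]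
    [LocallyCompactSpace G] [PolishSpace G]
    [MeasurableSpace G] [BorelSpace G]
    -- m_G : a left invariant Haar measure on G
    (μ : Measure G) [μ.IsHaarMeasure]
    -- Γ : a countable dense subgroup of G
    (Γ : Subgroup G) (hΓdense : Dense (Γ : Set G))
    -- Δ : a countable group, φ : G → Δ measurable, δ₁, δ₂ : Γ → Δ homomorphisms
    {Δ : Type*} [Group Δ] [Countable Δ]
    (φ : G → Δ) (hφmeas : ∀ d : Δ, MeasurableSet {x | φ x = d})
    (δ₁ δ₂ : Γ →* Δ)
    -- φ(gx) = δ₁(g) φ(x) δ₂(g)⁻¹ for all g ∈ Γ and almost every x ∈ G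
    (hφ : ∀ g : Γ, ∀ᵐ x ∂μ, φ ((g : G) * x) = δ₁ g * φ x * (δ₂ g)⁻¹) :
    -- there is an open subgroup G₀ < G such that φ is a.e. constant on every left
    -- coset of G₀: there is φ̃ : G/G₀ → Δ with φ(x) = φ̃(xG₀) for almost every x
    ∃ G₀ : OpenSubgroup G,
      ∃ φt : G ⧸ G₀.toSubgroup → Δ,
        ∀ᵐ x ∂μ, φ x = φt (QuotientGroup.mk x) := by
  let : MeasurableSpace Δ := ⊤
  have hφm : Measurable φ := measurable_to_countable' hφmeas
  have hconst (z : G) : EventuallyConst {x | φ (x * z) = φ x} (ae μ) :=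
    aeconst_of_dense_aestabilizer_of_isHaarMeasure μ
      ((measurableSet_eq_fun (hφm.comp (measurable_mul_const z)) hφm).nullMeasurableSet)
      (hΓdense.mono fun γ hγ ↦ mem_aestabilizer_setOf_apply_mul_eq μ (hφ ⟨γ, hγ⟩) z)
  have hopen := (aeRightPeriods μ φ).isOpen_of_measure_ne_zero μ
    (measurableSet_aeRightPeriods hφm) (measure_aeRightPeriods_ne_zero hφm hconst)
  obtain ⟨φt, hφt⟩ :=
    exists_ae_eq_comp_mk_of_ae_ae μ hopen (ae_ae_apply_eq_of_mem_aeRightPeriods hφm)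
  exact ⟨⟨aeRightPeriods μ φ, hopen⟩, φt, hφt⟩

theorem intertwiner_constant_on_open_cosets
    {G : Type*} [Group G] [TopologicalSpace G] [IsTopologicalGroup G]
    [LocallyCompactSpace G] [PolishSpace G]
    [MeasurableSpace G] [BorelSpace G]
    -- m_G : a left invariant Haar measure on G
    (μ : Measure G) [μ.IsHaarMeasure]
    -- Γ : a countable dense subgroup of G
    (Γ : Subgroup G) [Countable Γ] (hΓdense : Dense (Γ : Set G))
    -- Δ : a countable group, φ : G → Δ measurable, δ₁, δ₂ : Γ → Δ homomorphisms
    {Δ : Type*} [Group Δ] [Countable Δ]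
    (φ : G → Δ) (hφmeas : ∀ d : Δ, MeasurableSet {x | φ x = d})
    (δ₁ δ₂ : Γ →* Δ)
    -- φ(gx) = δ₁(g) φ(x) δ₂(g)⁻¹ for all g ∈ Γ and almost every x ∈ G
    (hφ : ∀ g : Γ, ∀ᵐ x ∂μ, φ ((g : G) * x) = δ₁ g * φ x * (δ₂ g)⁻¹) :
    -- there is an open subgroup G₀ < G such that φ is a.e. constant on every left
    -- coset of G₀: there is φ̃ : G/G₀ → Δ with φ(x) = φ̃(xG₀) for almost every x
    ∃ G₀ : OpenSubgroup G,
      ∃ φt : G ⧸ G₀.toSubgroup → Δ,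
        ∀ᵐ x ∂μ, φ x = φt (QuotientGroup.mk x) :=
  intertwiner_constant_on_open_cosets_general μ Γ hΓdense φ hφmeas δ₁ δ₂ hφ
end

section
/- Let G be a connected locally compact Polish group and Γ < G a countable dense subgroup. Let Δ be a countable group, φ : G → Δ a measurable map, and δ₁, δ₂ : Γ → Δ group homomorphisms such that φ(gx) = δ₁(g)·φ(x)·δ₂(g)⁻¹ for all g ∈ Γ and almost every x ∈ G (with respect to Haar measure). Then φ is essentially constant: there exists h ∈ Δ such that φ(x) = h for almost every x ∈ G. -/
/-!
Pick `d` whose fibre `A = {φ = d}` has positive measure. Steinhaus' theorem, applied to the points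
of `A` at which the intertwining relation holds for all of the countable group `Γ`, shows that
every `γ ∈ Γ` close to `1` fixes `d` under `d ↦ δ₁ γ * d * (δ₂ γ)⁻¹`. As `G` is connected, these
`γ` generate a dense subgroup, and `A` is almost invariant under it. Left translations by a dense
subgroup are ergodic: for compact `K` the set of `g` with `μ (g • K ∩ L) = 0` is closed, while
Fubini forbids it to be all of `G` when `μ K, μ L > 0`. Hence `A` is conull.
-/

open MeasureTheory Filter Set Topology ENNReal
open scoped Pointwise

section Fubini

variable {G : Type*} [Group G] [MeasurableSpace G] [MeasurableMul₂ G] [MeasurableInv G]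
  (μ : Measure G) [SFinite μ] [μ.IsMulLeftInvariant]

theorem exists_measure_smul_inter_ne_zero {K L : Set G} (hK : MeasurableSet K)
    (hL : MeasurableSet L) (hK₀ : μ K ≠ 0) (hL₀ : μ L ≠ 0) : ∃ g : G, μ (g • K ∩ L) ≠ 0 := by
  by_contra! h
  set P : Set (G × G) := (fun z => (z.2, z.2⁻¹ * z.1)) ⁻¹' (L ×ˢ K⁻¹)
  have hP : MeasurableSet P :=
    (measurable_snd.prodMk (measurable_snd.inv.mul measurable_fst)) (hL.prod hK.inv)
  have hslice (g : G) : Prod.mk g ⁻¹' P = g • K ∩ L := by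
    ext x
    simp [P, mem_smul_set_iff_inv_smul_mem, and_comm]
  have hnull : μ.prod μ P = 0 := by
    rw [Measure.measure_prod_null hP]
    exact ae_of_all _ fun g => by simp [hslice, h]
  rw [(measurePreserving_prod_inv_mul_swap μ μ).measure_preimage
    (hL.prod hK.inv).nullMeasurableSet, Measure.prod_prod, mul_eq_zero, measure_inv_null] at hnull
  exact hnull.elim hL₀ hK₀

end Fubini

section DenseTranslations

variable {G : Type*} [Group G] [TopologicalSpace G] [IsTopologicalGroup G] [LocallyCompactSpace G]
  [MeasurableSpace G] [BorelSpace G]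

theorem isClosed_setOf_measure_smul_inter_eq_zero (μ : Measure G) [IsFiniteMeasureOnCompacts μ]
    [μ.InnerRegularCompactLTTop] [μ.IsMulLeftInvariant] {K : Set G} (hK : IsCompact K)
    (hK' : IsClosed K) (L : Set G) : IsClosed {g : G | μ (g • K ∩ L) = 0} := by
  refine isClosed_of_closure_subset fun g hg => ?_
  have hle (g' : G) : μ (g • K ∩ L) ≤ μ (g' • K ∩ L) + μ ((g'⁻¹ * g) • K \ K) := calc
    μ (g • K ∩ L) ≤ μ (g' • K ∩ L ∪ g • K \ g' • K) := measure_mono fun x ⟨hxK, hxL⟩ =>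
        (em (x ∈ g' • K)).imp (fun h => ⟨h, hxL⟩) (fun h => ⟨hxK, h⟩)
    _ ≤ μ (g' • K ∩ L) + μ (g • K \ g' • K) := measure_union_le _ _
    _ = μ (g' • K ∩ L) + μ ((g'⁻¹ * g) • K \ K) := by
      rw [← measure_smul μ g'⁻¹ (g • K \ g' • K), smul_set_sdiff, smul_smul, smul_smul,
        inv_mul_cancel, one_smul]
  have htendsto : Tendsto (fun g' => μ ((g'⁻¹ * g) • K \ K)) (𝓝 g) (𝓝 0) :=
    (tendsto_measure_smul_sdiff_isCompact_isClosed hK hK').comp <|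
      (continuous_inv.mul continuous_const).tendsto' g 1 (inv_mul_cancel g)
  refine nonpos_iff_eq_zero.1 (ge_of_tendsto_of_frequently htendsto ?_)
  refine (mem_closure_iff_frequently.1 hg).mono fun g' (hg' : μ (g' • K ∩ L) = 0) => ?_
  simpa [hg'] using hle g'

/-- Unlike `aeconst_of_dense_aestabilizer_smul`, no finiteness of `μ` is needed. -/
theorem aeconst_of_dense_aestabilizer_self [SecondCountableTopology G] (μ : Measure G)
    [μ.IsHaarMeasure] [μ.InnerRegular] {A : Set G} (hA : MeasurableSet A)
    (hd : Dense (MulAction.aestabilizer G μ A : Set G)) : EventuallyConst A (ae μ) := by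
  refine eventuallyConst_set.2 (or_iff_not_imp_right.2 fun hA₀ => ?_)
  rw [← measure_eq_zero_iff_ae_notMem] at hA₀
  by_contra hAc
  obtain ⟨K, hKA, hK, hK₀⟩ := hA.exists_lt_isCompact (pos_iff_ne_zero.2 hA₀)
  have hinv (g : G) (hg : g ∈ MulAction.aestabilizer G μ A) : μ (g • closure K ∩ Aᶜ) = 0 := by
    refine measure_mono_null (inter_subset_inter_left _ (smul_set_mono
      (hK.closure_subset_measurableSet hA hKA))) ?_
    rw [← sdiff_eq]
    exact (ae_eq_set.1 (MulAction.mem_aestabilizer.1 hg)).1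
  obtain ⟨g, hg⟩ := exists_measure_smul_inter_ne_zero μ isClosed_closure.measurableSet hA.compl
    (by rw [hK.measure_closure]; exact hK₀.ne') hAc
  exact hg ((isClosed_setOf_measure_smul_inter_eq_zero μ hK.closure isClosed_closure Aᶜ
    ).closure_subset_iff.2 hinv (hd g))

end DenseTranslations

theorem Subgroup.dense_of_dense_inter_subset {G : Type*} [Group G] [TopologicalSpace G]
    [IsTopologicalGroup G] [ConnectedSpace G] (H : Subgroup G) {S U : Set G} (hS : Dense S)
    (hU : U ∈ 𝓝 1) (hSU : U ∩ S ⊆ H) : Dense (H : Set G) := by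
  obtain ⟨V, hVU, hV, hV1⟩ := mem_nhds_iff.1 hU
  have hnhds : (H.topologicalClosure : Set G) ∈ 𝓝 1 := by
    rw [H.topologicalClosure_coe]
    exact mem_of_superset (hV.mem_nhds hV1) (Subset.trans (hS.open_subset_closure_inter hV)
      (_root_.closure_mono ((inter_subset_inter_left S hVU).trans hSU)))
  have hopen := H.topologicalClosure.isOpen_of_mem_nhds hnhds
  rw [dense_iff_closure_eq, ← Subgroup.topologicalClosure_coe]
  exact IsClopen.eq_univ ⟨H.topologicalClosure.isClosed_of_isOpen hopen, hopen⟩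
    ⟨1, H.topologicalClosure.one_mem⟩

def twistedStabilizer {Γ Δ : Type*} [Group Γ] [Group Δ] (δ₁ δ₂ : Γ →* Δ) (d : Δ) :
    Subgroup Γ :=
  δ₁.eqLocus ((MulAut.conj d).toMonoidHom.comp δ₂)

theorem mem_twistedStabilizer {Γ Δ : Type*} [Group Γ] [Group Δ] {δ₁ δ₂ : Γ →* Δ} {d : Δ}
    {γ : Γ} : γ ∈ twistedStabilizer δ₁ δ₂ d ↔ δ₁ γ * d * (δ₂ γ)⁻¹ = d := by
  simp [twistedStabilizer, MonoidHom.eqLocus, mul_inv_eq_iff_eq_mul, eq_mul_inv_iff_mul_eq]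

section Intertwiner

variable {G : Type*} [Group G] [MeasurableSpace G] (μ : Measure G) {Γ : Subgroup G}
  {Δ : Type*} [Group Δ] {φ : G → Δ} {δ₁ δ₂ : Γ →* Δ}
  (hφ : ∀ g : Γ, ∀ᵐ x ∂μ, φ ((g : G) * x) = δ₁ g * φ x * (δ₂ g)⁻¹)
include hφ

theorem mem_aestabilizer_of_mem_twistedStabilizer [MeasurableMul G] [μ.IsMulLeftInvariant]
    {d : Δ} {γ : Γ} (hγ : γ ∈ twistedStabilizer δ₁ δ₂ d) :
    (γ : G) ∈ MulAction.aestabilizer G μ {x | φ x = d} := by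
  rw [← inv_mem_iff, MulAction.mem_aestabilizer, ← preimage_smul, eventuallyEq_set]
  filter_upwards [hφ γ] with x hx
  rw [mem_twistedStabilizer] at hγ
  simp only [mem_preimage, mem_ofPred_eq, smul_eq_mul, hx]
  conv_lhs => rw [← hγ]
  simp

theorem exists_mem_nhds_subset_twistedStabilizer [TopologicalSpace G] [IsTopologicalGroup G]
    [LocallyCompactSpace G] [BorelSpace G] [μ.IsHaarMeasure] [μ.InnerRegular] [Countable Γ] {d : Δ}
    (hd : MeasurableSet {x | φ x = d}) (hd₀ : μ {x | φ x = d} ≠ 0) :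
    ∃ U ∈ 𝓝 (1 : G), ∀ γ : Γ, (γ : G) ∈ U → γ ∈ twistedStabilizer δ₁ δ₂ d := by
  obtain ⟨N, hNbad, hN, hN₀⟩ := exists_measurable_superset_of_null (ae_iff.1 (ae_all_iff.2 hφ))
  set E := {x | φ x = d} \ N
  have hE : E / E ∈ 𝓝 (1 : G) := Measure.div_mem_nhds_one_of_haar_pos μ E (hd.diff hN)
    (by rwa [measure_sdiff_null hN₀, pos_iff_ne_zero])
  refine ⟨E / E, hE, ?_⟩
  rintro γ ⟨a, ⟨ha, -⟩, b, ⟨hb, hbN⟩, hab⟩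
  rw [mem_twistedStabilizer]
  have hrel : φ (γ * b) = δ₁ γ * φ b * (δ₂ γ)⁻¹ := not_not.1 (fun h => hbN (hNbad h)) γ
  have hγb : (γ : G) * b = a := by rw [← hab, div_mul_cancel]
  rw [hγb, ha, hb] at hrel
  exact hrel.symm

end Intertwiner

theorem intertwiner_essentially_constant
    {G : Type*} [Group G] [TopologicalSpace G] [IsTopologicalGroup G]
    [LocallyCompactSpace G] [PolishSpace G] [ConnectedSpace G]
    [MeasurableSpace G] [BorelSpace G]
    -- m_G : a left invariant Haar measure on G
    (μ : Measure G) [μ.IsHaarMeasure]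
    -- Γ : a countable dense subgroup of G
    (Γ : Subgroup G) [Countable Γ] (hΓdense : Dense (Γ : Set G))
    -- Δ : a countable group, φ : G → Δ measurable, δ₁, δ₂ : Γ → Δ homomorphisms
    {Δ : Type*} [Group Δ] [Countable Δ]
    (φ : G → Δ) (hφmeas : ∀ d : Δ, MeasurableSet {x | φ x = d})
    (δ₁ δ₂ : Γ →* Δ)
    -- φ(gx) = δ₁(g) φ(x) δ₂(g)⁻¹ for all g ∈ Γ and almost every x ∈ G
    (hφ : ∀ g : Γ, ∀ᵐ x ∂μ, φ ((g : G) * x) = δ₁ g * φ x * (δ₂ g)⁻¹) :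
    -- φ is essentially constant
    ∃ h : Δ, ∀ᵐ x ∂μ, φ x = h := by
  obtain ⟨d, hd⟩ : ∃ d, 0 < μ {x | φ x = d} :=
    exists_measure_pos_of_not_measure_iUnion_null <| by
      rw [iUnion_eq_univ_iff.2 fun x => ⟨φ x, rfl⟩]
      exact NeZero.ne _
  obtain ⟨U, hU, hUstab⟩ := exists_mem_nhds_subset_twistedStabilizer μ hφ (hφmeas d) hd.ne'
  have hdense : Dense (MulAction.aestabilizer G μ {x | φ x = d} : Set G) :=
    Subgroup.dense_of_dense_inter_subset _ hΓdense hU fun g ⟨hgU, hgΓ⟩ =>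
      mem_aestabilizer_of_mem_twistedStabilizer μ hφ (hUstab ⟨g, hgΓ⟩ hgU)
  refine ⟨d, (eventuallyConst_set.1 (aeconst_of_dense_aestabilizer_self μ (hφmeas d) hdense)
    ).resolve_right ?_⟩
  exact fun h => hd.ne' (measure_eq_zero_iff_ae_notMem.2 h)
end
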